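/- arXiv:2109.01586 — 5 statements merged into one kernel-verified Lean document; each statement's English description precedes it below -/
import Mathlib

section
/- The set {φ_b : b ∈ ℱ'} spans V; that is, the ℚ-linear span of {φ_b : b ∈ ℱ'} equals the ℚ-linear span of {φ_a : a ∈ ℱ}. -/
open Finset

attribute [local instance] Classical.propDecidable

noncomputable section

/-- Positions: `(i, j)` stands for the `(j+1)`-st column of the `(i+1)`-st block,
i.e. the column `i*r + (j+1)` of `{1, ..., nr}`. -/
abbrev Pos (n r : ℕ) := Fin n × Fin r

/-- The set `X` of all functions `{1,...,nr} → {1,...,q}` (value `k` of `Fin q`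
standing for the symbol `k+1`). -/
abbrev XX (q n r : ℕ) := Pos n r → Fin q

/-- The subset `S = ⋃_{i=1}^n {(i-1)r+1, ..., (i-1)r+t_i}` of `{1,...,nr}` attached to a
tuple `(t_1,...,t_n)`: position `(i,j)` belongs to it iff `j < t_i`. -/
def blockSet (n r : ℕ) (tv : Fin n → ℕ) : Finset (Pos n r) :=
  Finset.univ.filter fun p => (p.2 : ℕ) < tv p.1

/-- The tuples `(t_1, ..., t_n)` with `0 ≤ t_i ≤ r` and `t_1 + ⋯ + t_n = t`. -/
def tuples (n r t : ℕ) : Finset (Fin n → ℕ) :=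
  (Fintype.piFinset fun _ : Fin n => Finset.range (r + 1)).filter fun tv => ∑ i, tv i = t

/-- The family `𝒮` of admissible `t`-subsets of `{1,...,nr}`. -/
def SS (n r t : ℕ) : Finset (Finset (Pos n r)) := (tuples n r t).image (blockSet n r)

/-- `Y` is a `t-(q,n,r,λ)` ordered orthogonal array. -/
def IsOOA (q n r t lam : ℕ) (Y : Finset (XX q n r)) : Prop :=
  Y.card = lam * q ^ t ∧
    ∀ tv ∈ tuples n r t, ∀ a : XX q n r,
      (Y.filter fun x => ∀ p ∈ blockSet n r tv, x p = a p).card = lam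

/-- `φ_a` for a function `a : S → {1,...,q}`. -/
def phi {q n r : ℕ} (S : Finset (Pos n r)) (a : ↥S → Fin q) (x : XX q n r) : ℚ :=
  if ∀ p : ↥S, x ↑p = a p then 1 else 0

/-- The index set `ℱ` of all functions `a : S → {1,...,q}` with `S ∈ 𝒮`. -/
def FF (q n r t : ℕ) : Finset (Σ S : Finset (Pos n r), ↥S → Fin q) :=
  (SS n r t).sigma fun _ => Finset.univ

/-- The vector space `V`, the `ℚ`-span of `{φ_a : a ∈ ℱ}`. -/
def VV (q n r t : ℕ) : Submodule ℚ (XX q n r → ℚ) :=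
  Submodule.span ℚ {f | ∃ a ∈ FF q n r t, f = phi a.1 a.2}

/-- The family `𝒮'` of all subsets of members of `𝒮`. -/
def SS' (n r t : ℕ) : Finset (Finset (Pos n r)) :=
  Finset.univ.filter fun T => ∃ S ∈ SS n r t, T ⊆ S

/-- The index set `ℱ'` of all functions `b : T → {1,...,q-1}` with `T ∈ 𝒮'`. -/
def FF' (q n r t : ℕ) : Finset (Σ T : Finset (Pos n r), ↥T → Fin (q - 1)) :=
  (SS' n r t).sigma fun _ => Finset.univ

/-- `φ_b` for a function `b : T → {1,...,q-1}` (values embedded into `{1,...,q}`). -/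
def phi' {q n r : ℕ} (T : Finset (Pos n r)) (b : ↥T → Fin (q - 1)) (x : XX q n r) : ℚ :=
  if ∀ p : ↥T, x ↑p = Fin.castLE (Nat.sub_le q 1) (b p) then 1 else 0

/-- The extension `x^b ∈ X` of `b : T → {1,...,q-1}`, taking the value `q` outside `T`. -/
def xb {q n r : ℕ} (hq : 1 ≤ q) (T : Finset (Pos n r)) (b : ↥T → Fin (q - 1)) : XX q n r :=
  fun p => if h : p ∈ T then Fin.castLE (Nat.sub_le q 1) (b ⟨p, h⟩) else ⟨q - 1, by omega⟩

/-- The partial order `⪯` on partial functions: `a ⪯ b` iff `b` extends `a`. -/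
def pre {q n r : ℕ} (a b : Σ T : Finset (Pos n r), ↥T → Fin (q - 1)) : Prop :=
  ∃ h : a.1 ⊆ b.1, ∀ p : ↥a.1, b.2 ⟨↑p, h p.2⟩ = a.2 p

/-- `γ_b(x) = (-1)^{|T| - |S|}` if `x = x^c` for some `c : S → {1,...,q-1}` in `ℱ'` with
`c ⪯ b`, and `γ_b(x) = 0` otherwise.  (Note that such a `c` is unique, with
`S = {p : x p ≠ q}`.) -/
def gamma (q n r t : ℕ) (hq : 1 ≤ q) (b : Σ T : Finset (Pos n r), ↥T → Fin (q - 1))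
    (x : XX q n r) : ℤ :=
  if ∃ c ∈ FF' q n r t, pre c b ∧ x = xb hq c.1 c.2 then
    (-1) ^ (b.1.card - (Finset.univ.filter fun p : Pos n r => ((x p : ℕ) ≠ q - 1)).card)
  else 0

/-- Restriction of a partial function along a subset inclusion. -/
def restr {α β : Type*} {T' T : Finset α} (h : T' ⊆ T) (a : ↥T → β) : ↥T' → β :=
  fun p => a ⟨↑p, h p.2⟩

lemma phi'_mem_VV (q n r t : ℕ) (T : Finset (Pos n r)) (hT : T ∈ SS' n r t)
    (b : ↥T → Fin (q - 1)) : phi' T b ∈ VV q n r t := by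
  obtain ⟨-, S, hS, hTS⟩ := Finset.mem_filter.1 hT
  have key : phi' T b = ∑ c ∈ Finset.univ.filter (fun c : ↥S → Fin q =>
      ∀ p : ↥T, c ⟨↑p, hTS p.2⟩ = Fin.castLE (Nat.sub_le q 1) (b p)), phi S c := by
    funext x
    rw [Finset.sum_apply]
    have h1 : ∀ c : ↥S → Fin q, phi S c x
        = if c = (fun p : ↥S => x ↑p) then (1 : ℚ) else 0 := by
      intro c
      unfold phi
      congr 1
      simp only [eq_iff_iff]
      constructor
      · intro h; funext p; exact (h p).symm
      · intro h p; exact (congrFun h p).symm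
    rw [Finset.sum_congr rfl fun c _ => h1 c, Finset.sum_ite_eq' _ (fun p : ↥S => x ↑p)]
    simp only [Finset.mem_filter, Finset.mem_univ, true_and]
    unfold phi'
    congr 1
  rw [key]
  refine Submodule.sum_mem _ fun c _ => Submodule.subset_span ?_
  exact ⟨⟨S, c⟩, Finset.mem_sigma.2 ⟨hS, Finset.mem_univ _⟩, rfl⟩

lemma phi_mem_span (q n r t : ℕ) (hq : 2 ≤ q) :
    ∀ (k : ℕ) (T : Finset (Pos n r)), T ∈ SS' n r t → ∀ a : ↥T → Fin q,
      (Finset.univ.filter fun p : ↥T => (a p : ℕ) = q - 1).card = k →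
      phi T a ∈ Submodule.span ℚ
        {f : XX q n r → ℚ | ∃ b ∈ FF' q n r t, f = phi' b.1 b.2} := by
  intro k
  induction k with
  | zero =>
    intro T hT a hcard
    have hlt : ∀ p : ↥T, (a p : ℕ) < q - 1 := by
      intro p
      have hne : (a p : ℕ) ≠ q - 1 := by
        intro h
        have : p ∈ Finset.univ.filter fun p : ↥T => (a p : ℕ) = q - 1 :=
          Finset.mem_filter.2 ⟨Finset.mem_univ _, h⟩
        rw [Finset.card_eq_zero.1 hcard] at this
        exact absurd this (Finset.notMem_empty _)
      have := (a p).2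
      omega
    set b : ↥T → Fin (q - 1) := fun p => ⟨(a p : ℕ), hlt p⟩ with hb
    have hphi : phi T a = phi' T b := by
      funext x
      unfold phi phi'
      congr 1
    rw [hphi]
    exact Submodule.subset_span ⟨⟨T, b⟩, Finset.mem_sigma.2 ⟨hT, Finset.mem_univ _⟩, rfl⟩
  | succ k ih =>
    intro T hT a hcard
    have hne : (Finset.univ.filter fun p : ↥T => (a p : ℕ) = q - 1).Nonempty := by
      rw [← Finset.card_pos, hcard]; omega
    obtain ⟨p₀, hp₀mem⟩ := hne
    have hp₀ : (a p₀ : ℕ) = q - 1 := (Finset.mem_filter.1 hp₀mem).2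
    set T' := T.erase ↑p₀ with hT'def
    have hT'sub : T' ⊆ T := Finset.erase_subset _ _
    have hT' : T' ∈ SS' n r t := by
      obtain ⟨-, S, hS, hTS⟩ := Finset.mem_filter.1 hT
      exact Finset.mem_filter.2 ⟨Finset.mem_univ _, S, hS, hT'sub.trans hTS⟩
    have hmemT' : ∀ p : ↥T, p ≠ p₀ → (↑p : Pos n r) ∈ T' := fun p hp =>
      Finset.mem_erase.2 ⟨fun h => hp (Subtype.ext h), p.2⟩
    have key : phi T a = phi T' (restr hT'sub a)
        - ∑ v ∈ Finset.univ.filter (fun v : Fin q => (v : ℕ) ≠ q - 1),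
            phi T (Function.update a p₀ v) := by
      funext x
      rw [Pi.sub_apply, Finset.sum_apply]
      have hiff1 : (∀ p : ↥T, x ↑p = a p)
          ↔ ((∀ p : ↥T', x ↑p = restr hT'sub a p) ∧ x ↑p₀ = a p₀) := by
        constructor
        · intro h; exact ⟨fun p => h ⟨↑p, hT'sub p.2⟩, h p₀⟩
        · rintro ⟨hC, hp⟩ p
          rcases eq_or_ne p p₀ with rfl | hne
          · exact hp
          · exact hC ⟨↑p, hmemT' p hne⟩
      have hiff2 : ∀ v : Fin q, (∀ p : ↥T, x ↑p = Function.update a p₀ v p)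
          ↔ ((∀ p : ↥T', x ↑p = restr hT'sub a p) ∧ x ↑p₀ = v) := by
        intro v
        constructor
        · intro h
          constructor
          · intro p
            have hpne : (⟨↑p, hT'sub p.2⟩ : ↥T) ≠ p₀ := fun hh =>
              (Finset.mem_erase.1 p.2).1 (congrArg Subtype.val hh)
            have := h ⟨↑p, hT'sub p.2⟩
            rwa [Function.update_of_ne hpne] at this
          · have := h p₀
            rwa [Function.update_self] at this
        · rintro ⟨hC, hv⟩ p
          rcases eq_or_ne p p₀ with rfl | hne
          · rwa [Function.update_self]
          · rw [Function.update_of_ne hne]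
            exact hC ⟨↑p, hmemT' p hne⟩
      unfold phi
      by_cases hC : ∀ p : ↥T', x ↑p = restr hT'sub a p
      · have hsum : (∑ v ∈ Finset.univ.filter (fun v : Fin q => (v : ℕ) ≠ q - 1),
            if ∀ p : ↥T, x ↑p = Function.update a p₀ v p then (1 : ℚ) else 0)
            = if (x ↑p₀ : ℕ) ≠ q - 1 then 1 else 0 := by
          have hc : ∀ v ∈ Finset.univ.filter (fun v : Fin q => (v : ℕ) ≠ q - 1),
              (if ∀ p : ↥T, x ↑p = Function.update a p₀ v p then (1 : ℚ) else 0)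
              = if x ↑p₀ = v then 1 else 0 := by
            intro v _
            congr 1
            simp only [eq_iff_iff, hiff2 v]
            exact and_iff_right hC
          rw [Finset.sum_congr rfl hc, Finset.sum_ite_eq]
          simp only [Finset.mem_filter, Finset.mem_univ, true_and]
        rw [hsum, if_pos hC]
        have hA : (∀ p : ↥T, x ↑p = a p) ↔ (x ↑p₀ : ℕ) = q - 1 := by
          rw [hiff1, and_iff_right hC, Fin.ext_iff, hp₀]
        by_cases h : (x ↑p₀ : ℕ) = q - 1
        · rw [if_pos (hA.2 h), if_neg (by simpa using h)]; ring
        · rw [if_neg (fun hh => h (hA.1 hh)), if_pos h]; ring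
      · rw [if_neg hC, if_neg (fun h => hC (hiff1.1 h).1)]
        rw [Finset.sum_congr rfl (fun v _ => if_neg (fun h => hC ((hiff2 v).1 h).1))]
        simp
    rw [key]
    refine sub_mem (ih T' hT' (restr hT'sub a) ?_) (Submodule.sum_mem _ fun v hv => ih T hT _ ?_)
    · have hbij : (Finset.univ.filter fun p : ↥T' => ((restr hT'sub a) p : ℕ) = q - 1).card
          = ((Finset.univ.filter fun p : ↥T => (a p : ℕ) = q - 1).erase p₀).card := by
        apply Finset.card_bij (fun (p : ↥T') (_ : p ∈ Finset.univ.filter fun p : ↥T' => ((restr hT'sub a) p : ℕ) = q - 1) => (⟨↑p, hT'sub p.2⟩ : ↥T))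
        · intro p hp
          have hp' := (Finset.mem_filter.1 hp).2
          refine Finset.mem_erase.2 ⟨?_, Finset.mem_filter.2 ⟨Finset.mem_univ _, hp'⟩⟩
          intro h
          exact (Finset.mem_erase.1 p.2).1 (congrArg Subtype.val h)
        · intro p _ p' _ h
          exact Subtype.ext (by simpa using h)
        · intro p hp
          obtain ⟨hne', hmem⟩ := Finset.mem_erase.1 hp
          refine ⟨⟨↑p, hmemT' p hne'⟩, Finset.mem_filter.2
            ⟨Finset.mem_univ _, (Finset.mem_filter.1 hmem).2⟩, Subtype.ext rfl⟩
      rw [hbij, Finset.card_erase_of_mem hp₀mem, hcard]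
      omega
    · have hv' : (v : ℕ) ≠ q - 1 := (Finset.mem_filter.1 hv).2
      have heq : (Finset.univ.filter fun p : ↥T => ((Function.update a p₀ v) p : ℕ) = q - 1)
          = (Finset.univ.filter fun p : ↥T => (a p : ℕ) = q - 1).erase p₀ := by
        ext p
        simp only [Finset.mem_filter, Finset.mem_erase, Finset.mem_univ, true_and]
        rcases eq_or_ne p p₀ with rfl | hp
        · simp [Function.update_self, hv']
        · simp [Function.update_of_ne hp, hp]
      rw [heq, Finset.card_erase_of_mem hp₀mem, hcard]
      omega

/-- The set `{φ_b : b ∈ ℱ'}` spans `V`: its `ℚ`-linear span equals the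
`ℚ`-linear span `V` of `{φ_a : a ∈ ℱ}`. -/
theorem stmt8 (q n r t : ℕ) (hq : 2 ≤ q) (hn : 1 ≤ n) (hr : 1 ≤ r) (ht : 1 ≤ t)
    (htnr : t ≤ n * r) :
    Submodule.span ℚ {f : XX q n r → ℚ | ∃ b ∈ FF' q n r t, f = phi' b.1 b.2} =
      VV q n r t := by
  apply le_antisymm
  · rw [Submodule.span_le]
    rintro f ⟨b, hb, rfl⟩
    exact phi'_mem_VV q n r t b.1 (Finset.mem_sigma.1 hb).1 b.2
  · rw [VV, Submodule.span_le]
    rintro f ⟨a, ha, rfl⟩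
    have hS : a.1 ∈ SS' n r t := by
      refine Finset.mem_filter.2 ⟨Finset.mem_univ _, a.1, ?_, le_refl _⟩
      exact (Finset.mem_sigma.1 ha).1
    exact phi_mem_span q n r t hq _ a.1 hS a.2 rfl
end
end

section
/- For all a, b ∈ ℱ', Σ_{x∈X} γ_b(x) φ_a(x) = δ_{a,b} (Kronecker delta: 1 if a = b and 0 otherwise). -/
open Finset

attribute [local instance] Classical.propDecidable

noncomputable section

section Aux

variable {q n r t : ℕ}

lemma xb_val_mem {hq : 1 ≤ q} {T : Finset (Pos n r)} {f : ↥T → Fin (q-1)} {p : Pos n r}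
    (hp : p ∈ T) : xb hq T f p = Fin.castLE (Nat.sub_le q 1) (f ⟨p, hp⟩) := by
  simp [xb, hp]

lemma xb_val_notMem {hq : 1 ≤ q} {T : Finset (Pos n r)} {f : ↥T → Fin (q-1)} {p : Pos n r}
    (hp : p ∉ T) : ((xb hq T f p : Fin q) : ℕ) = q - 1 := by
  simp [xb, hp]

lemma mem_iff_xb {hq : 1 ≤ q} {T : Finset (Pos n r)} {f : ↥T → Fin (q-1)} {p : Pos n r} :
    p ∈ T ↔ ((xb hq T f p : Fin q) : ℕ) ≠ q - 1 := by
  constructor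
  · intro hp
    rw [xb_val_mem hp]
    have := (f ⟨p, hp⟩).isLt
    simp only [Fin.coe_castLE]
    omega
  · intro h
    by_contra hp
    exact h (xb_val_notMem hp)

lemma sig_ext {c c' : Σ T : Finset (Pos n r), ↥T → Fin (q-1)} (h1 : c.1 = c'.1)
    (h2 : ∀ (p : Pos n r) (hp : p ∈ c.1) (hp' : p ∈ c'.1), c.2 ⟨p, hp⟩ = c'.2 ⟨p, hp'⟩) :
    c = c' := by
  obtain ⟨T, f⟩ := c
  obtain ⟨T', f'⟩ := c'
  dsimp at h1 h2
  subst h1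
  suffices hf : f = f' by rw [hf]
  funext p
  exact h2 p p.2 p.2

lemma xb_inj {hq : 1 ≤ q} {c c' : Σ T : Finset (Pos n r), ↥T → Fin (q-1)}
    (h : xb hq c.1 c.2 = xb hq c'.1 c'.2) : c = c' := by
  have h1 : c.1 = c'.1 := by
    ext p
    rw [mem_iff_xb (hq := hq) (f := c.2), mem_iff_xb (hq := hq) (f := c'.2), h]
  refine sig_ext h1 fun p hp hp' => ?_
  have h2 := congrFun h p
  rw [xb_val_mem hp, xb_val_mem hp'] at h2
  exact Fin.ext (by simpa using congrArg Fin.val h2)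

lemma pre_refl (c : Σ T : Finset (Pos n r), ↥T → Fin (q-1)) : pre c c :=
  ⟨le_refl _, fun _ => rfl⟩

lemma pre_trans {a c b : Σ T : Finset (Pos n r), ↥T → Fin (q-1)}
    (hac : pre a c) (hcb : pre c b) : pre a b := by
  obtain ⟨h1, h2⟩ := hac
  obtain ⟨h3, h4⟩ := hcb
  exact ⟨fun p hp => h3 (h1 hp), fun p => by rw [h4 ⟨↑p, h1 p.2⟩, h2 p]⟩

lemma pre_antisymm {a b : Σ T : Finset (Pos n r), ↥T → Fin (q-1)}
    (hab : pre a b) (h1 : a.1 = b.1) : a = b := by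
  obtain ⟨hs, hv⟩ := hab
  refine sig_ext h1 fun p hp hp' => ?_
  exact (hv ⟨p, hp⟩).symm

lemma mem_FF'_iff {c : Σ T : Finset (Pos n r), ↥T → Fin (q-1)} :
    c ∈ FF' q n r t ↔ c.1 ∈ SS' n r t := by
  obtain ⟨T, f⟩ := c
  simp [FF', Finset.mem_sigma]

lemma SS'_down {T T' : Finset (Pos n r)} (hT : T ∈ SS' n r t) (h : T' ⊆ T) :
    T' ∈ SS' n r t := by
  simp only [SS', Finset.mem_filter, Finset.mem_univ, true_and] at hT ⊢
  obtain ⟨S, hS, hTS⟩ := hT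
  exact ⟨S, hS, h.trans hTS⟩

lemma phi'_xb {hq : 1 ≤ q} {a c : Σ T : Finset (Pos n r), ↥T → Fin (q-1)} :
    phi' a.1 a.2 (xb hq c.1 c.2) = if pre a c then 1 else 0 := by
  by_cases hac : pre a c
  · obtain ⟨hs, hv⟩ := hac
    rw [if_pos ⟨hs, hv⟩]
    unfold phi'
    rw [if_pos]
    intro p
    rw [xb_val_mem (hs p.2), hv p]
  · rw [if_neg hac]
    unfold phi'
    rw [if_neg]
    intro hcond
    apply hac
    have hs : a.1 ⊆ c.1 := by
      intro p hp
      by_contra hpc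
      have h2 := congrArg Fin.val (hcond ⟨p, hp⟩)
      rw [xb_val_notMem hpc] at h2
      have := (a.2 ⟨p, hp⟩).isLt
      simp only [Fin.coe_castLE] at h2
      omega
    refine ⟨hs, fun p => ?_⟩
    have h2 := hcond p
    rw [xb_val_mem (hs p.2)] at h2
    exact Fin.ext (by simpa using congrArg Fin.val h2)

lemma gamma_xb {hq : 1 ≤ q} {b c : Σ T : Finset (Pos n r), ↥T → Fin (q-1)}
    (hc : c ∈ FF' q n r t) (hcb : pre c b) :
    gamma q n r t hq b (xb hq c.1 c.2) = (-1) ^ (b.1.card - c.1.card) := by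
  unfold gamma
  rw [if_pos ⟨c, hc, hcb, rfl⟩]
  have hfil : (Finset.univ.filter fun p : Pos n r => ((xb hq c.1 c.2 p : Fin q) : ℕ) ≠ q - 1)
      = c.1 := by
    ext p
    simp only [Finset.mem_filter, Finset.mem_univ, true_and]
    exact (mem_iff_xb (hq := hq) (f := c.2)).symm
  rw [hfil]

lemma sum_powerset_q {α : Type*} (D : Finset α) :
    (∑ U ∈ D.powerset, (-1 : ℚ) ^ U.card) = if D = ∅ then 1 else 0 := by
  classical
  calc (∑ U ∈ D.powerset, (-1 : ℚ) ^ U.card)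
      = ((∑ U ∈ D.powerset, (-1 : ℤ) ^ U.card : ℤ) : ℚ) := by push_cast; rfl
    _ = _ := by rw [Finset.sum_powerset_neg_one_pow_card]; split <;> simp

end Aux

/-- For all `a, b ∈ ℱ'`, `∑_{x ∈ X} γ_b(x) φ_a(x) = δ_{a,b}`. -/
theorem stmt9 (q n r t : ℕ) (hq : 2 ≤ q) (hn : 1 ≤ n) (hr : 1 ≤ r) (ht : 1 ≤ t)
    (htnr : t ≤ n * r) (a b : Σ T : Finset (Pos n r), ↥T → Fin (q - 1))
    (ha : a ∈ FF' q n r t) (hb : b ∈ FF' q n r t) :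
    ∑ x : XX q n r, (gamma q n r t (by omega) b x : ℚ) * phi' a.1 a.2 x =
      if a = b then 1 else 0 := by
    classical
  have hq1 : 1 ≤ q := by omega
  show ∑ x : XX q n r, (gamma q n r t hq1 b x : ℚ) * phi' a.1 a.2 x = if a = b then 1 else 0
  set T := (FF' q n r t).filter (fun c => pre a c ∧ pre c b) with hTdef
  have hstep1 : ∑ x : XX q n r, (gamma q n r t hq1 b x : ℚ) * phi' a.1 a.2 x
      = ∑ c ∈ T, ((-1 : ℚ)) ^ (b.1.card - c.1.card) := by
    have hzero : ∀ x ∈ (Finset.univ : Finset (XX q n r)),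
        x ∉ T.image (fun c : Σ S : Finset (Pos n r), ↥S → Fin (q-1) => xb hq1 c.1 c.2) →
        (gamma q n r t hq1 b x : ℚ) * phi' a.1 a.2 x = 0 := by
      intro x _ hx
      by_cases hcond : ∃ c ∈ FF' q n r t, pre c b ∧ x = xb hq1 c.1 c.2
      · obtain ⟨c, hcF, hcb, hxc⟩ := hcond
        have hac : ¬ pre a c := fun hac =>
          hx (Finset.mem_image.mpr ⟨c, Finset.mem_filter.mpr ⟨hcF, hac, hcb⟩, hxc.symm⟩)
        rw [hxc, phi'_xb, if_neg hac, mul_zero]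
      · unfold gamma
        rw [if_neg hcond]
        simp
    rw [← Finset.sum_subset (Finset.subset_univ _) hzero]
    rw [Finset.sum_image (fun c hc c' hc' h => xb_inj h)]
    refine Finset.sum_congr rfl fun c hc => ?_
    obtain ⟨hcF, hac, hcb⟩ := Finset.mem_filter.mp hc
    rw [gamma_xb hcF hcb, phi'_xb, if_pos hac, mul_one]
    push_cast
    ring
  rw [hstep1]
  by_cases hab : pre a b
  · obtain ⟨hsub, hval⟩ := hab
    have haF : a.1 ∈ SS' n r t := mem_FF'_iff.mp ha
    have hbF : b.1 ∈ SS' n r t := mem_FF'_iff.mp hb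
    set D := b.1 \ a.1 with hD
    have hsub2 : ∀ U : Finset (Pos n r), a.1 ∪ (U ∩ D) ⊆ b.1 := fun U =>
      Finset.union_subset hsub ((Finset.inter_subset_right).trans (Finset.sdiff_subset))
    have hstep2 : ∑ c ∈ T, ((-1 : ℚ)) ^ (b.1.card - c.1.card)
        = ∑ U ∈ D.powerset, ((-1 : ℚ)) ^ (D.card - U.card) := by
      refine Finset.sum_nbij' (fun c => c.1 \ a.1)
        (fun U => ⟨a.1 ∪ (U ∩ D), fun p => b.2 ⟨↑p, hsub2 U p.2⟩⟩) ?_ ?_ ?_ ?_ ?_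
      · intro c hc
        obtain ⟨hcF, hac, hcb⟩ := Finset.mem_filter.mp hc
        exact Finset.mem_powerset.mpr (Finset.sdiff_subset_sdiff hcb.1 (le_refl _))
      · intro U hU
        have hU' : U ⊆ D := Finset.mem_powerset.mp hU
        refine Finset.mem_filter.mpr ⟨mem_FF'_iff.mpr (SS'_down hbF (hsub2 U)), ?_, ?_⟩
        · exact ⟨Finset.subset_union_left, fun p => hval p⟩
        · exact ⟨hsub2 U, fun p => rfl⟩
      · intro c hc
        obtain ⟨hcF, hac, hcb⟩ := Finset.mem_filter.mp hc
        have h1 : a.1 ∪ ((c.1 \ a.1) ∩ D) = c.1 := by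
          have : (c.1 \ a.1) ∩ D = c.1 \ a.1 :=
            Finset.inter_eq_left.mpr (Finset.sdiff_subset_sdiff hcb.1 (le_refl _))
          rw [this, Finset.union_sdiff_of_subset hac.1]
        refine (sig_ext h1.symm ?_).symm
        intro p hp hp'
        exact (hcb.2 ⟨p, hp⟩).symm
      · intro U hU
        have hU' : U ⊆ D := Finset.mem_powerset.mp hU
        have h1 : U ∩ D = U := Finset.inter_eq_left.mpr hU'
        show (a.1 ∪ (U ∩ D)) \ a.1 = U
        rw [h1, Finset.union_sdiff_cancel_left
          (Finset.disjoint_of_subset_right hU' Finset.disjoint_sdiff)]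
      · intro c hc
        obtain ⟨hcF, hac, hcb⟩ := Finset.mem_filter.mp hc
        have h1 : a.1 ⊆ c.1 := hac.1
        have h2 : c.1 ⊆ b.1 := hcb.1
        congr 1
        rw [Finset.card_sdiff_of_subset h1, hD, Finset.card_sdiff_of_subset hsub]
        have := Finset.card_le_card h1
        have := Finset.card_le_card h2
        omega
    rw [hstep2]
    have hle : ∀ U ∈ D.powerset, ((-1 : ℚ)) ^ (D.card - U.card)
        = ((-1 : ℚ)) ^ D.card * ((-1 : ℚ)) ^ U.card := by
      intro U hU
      have hud : U.card ≤ D.card := Finset.card_le_card (Finset.mem_powerset.mp hU)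
      rw [← pow_add]
      have h3 : D.card + U.card = (D.card - U.card) + 2 * U.card := by omega
      rw [h3, pow_add, pow_mul]
      norm_num
    rw [Finset.sum_congr rfl hle, ← Finset.mul_sum, sum_powerset_q]
    by_cases habe : a = b
    · have : D = ∅ := by rw [hD, habe, Finset.sdiff_self]
      rw [if_pos this, if_pos habe, this]
      norm_num
    · have hD' : D ≠ ∅ := by
        intro hDe
        apply habe
        apply pre_antisymm ⟨hsub, hval⟩
        exact Finset.Subset.antisymm hsub (by
          intro p hp
          by_contra hpa
          exact (Finset.eq_empty_iff_forall_notMem.mp hDe p)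
            (Finset.mem_sdiff.mpr ⟨hp, hpa⟩))
      rw [if_neg hD', if_neg habe, mul_zero]
  · have hTe : T = ∅ := by
      rw [Finset.eq_empty_iff_forall_notMem]
      intro c hc
      obtain ⟨hcF, hac, hcb⟩ := Finset.mem_filter.mp hc
      exact hab (pre_trans hac hcb)
    have habe : a ≠ b := fun h => hab (h ▸ pre_refl a)
    rw [hTe, Finset.sum_empty, if_neg habe]
end
end

section
/- The family {φ_b : b ∈ ℱ'} is linearly independent over ℚ; hence it is a ℚ-basis of V and dim_ℚ V = |ℱ'|. -/
open Finset

attribute [local instance] Classical.propDecidable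

noncomputable section

namespace Stmt10Aux

variable {q n r t : ℕ}

/-- Indicator that `x` agrees with the total function `a` on `T`. -/
def Phi (T : Finset (Pos n r)) (a : Pos n r → Fin q) (x : XX q n r) : ℚ :=
  if ∀ p ∈ T, x p = a p then 1 else 0

lemma Phi_eq_sum {T : Finset (Pos n r)} {p : Pos n r} (hp : p ∉ T) (a : Pos n r → Fin q) :
    Phi T a = fun x => ∑ k : Fin q, Phi (insert p T) (Function.update a p k) x := by
  funext x
  have hterm : ∀ k : Fin q,
      Phi (insert p T) (Function.update a p k) x
        = if x p = k ∧ ∀ u ∈ T, x u = a u then (1:ℚ) else 0 := by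
    intro k
    unfold Phi
    refine if_congr ?_ rfl rfl
    rw [Finset.forall_mem_insert, Function.update_self]
    constructor
    · rintro ⟨h1, h2⟩
      refine ⟨h1, fun u hu => ?_⟩
      have := h2 u hu
      rwa [Function.update_of_ne (by rintro rfl; exact hp hu)] at this
    · rintro ⟨h1, h2⟩
      refine ⟨h1, fun u hu => ?_⟩
      rw [Function.update_of_ne (by rintro rfl; exact hp hu)]
      exact h2 u hu
  rw [Finset.sum_congr rfl fun k _ => hterm k]
  unfold Phi
  by_cases hC : ∀ u ∈ T, x u = a u
  · have hs : ∀ k : Fin q, (if x p = k ∧ ∀ u ∈ T, x u = a u then (1:ℚ) else 0)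
        = if k = x p then 1 else 0 :=
      fun k => if_congr ⟨fun h => h.1.symm, fun h => ⟨h.symm, hC⟩⟩ rfl rfl
    rw [Finset.sum_congr rfl fun k _ => hs k,
      Finset.sum_ite_eq' Finset.univ (x p) fun _ => (1:ℚ), if_pos (Finset.mem_univ _)]
    exact if_pos hC
  · have hs : ∀ k : Fin q, (if x p = k ∧ ∀ u ∈ T, x u = a u then (1:ℚ) else 0) = 0 :=
      fun k => if_neg (by tauto)
    rw [Finset.sum_congr rfl fun k _ => hs k, Finset.sum_const_zero]
    exact if_neg hC

lemma mem_SS'_of_subset {T T' : Finset (Pos n r)} (h : T' ⊆ T) (hT : T ∈ SS' n r t) :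
    T' ∈ SS' n r t := by
  simp only [SS', Finset.mem_filter, Finset.mem_univ, true_and] at hT ⊢
  obtain ⟨S, hS, hTS⟩ := hT
  exact ⟨S, hS, h.trans hTS⟩

lemma stepA : ∀ (k : ℕ) (S T : Finset (Pos n r)) (a : Pos n r → Fin q),
    S ∈ SS n r t → T ⊆ S → S.card - T.card = k → Phi T a ∈ VV q n r t := by
  intro k
  induction k with
  | zero =>
    intro S T a hS hTS hcard
    have hle : S.card ≤ T.card := by
      have := Finset.card_le_card hTS; omega
    have hTeq : T = S := Finset.eq_of_subset_of_card_le hTS hle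
    subst hTeq
    have heq : Phi T a = phi T (fun p => a ↑p) := by
      funext x
      unfold Phi phi
      refine if_congr ?_ rfl rfl
      constructor
      · intro h p; exact h ↑p p.2
      · intro h u hu; exact h ⟨u, hu⟩
    rw [heq]
    exact Submodule.subset_span ⟨⟨T, fun p => a ↑p⟩,
      Finset.mem_sigma.mpr ⟨hS, Finset.mem_univ _⟩, rfl⟩
  | succ k ih =>
    intro S T a hS hTS hcard
    have hlt : T.card < S.card := by
      have := Finset.card_le_card hTS; omega
    have hex : ∃ p ∈ S, p ∉ T := by
      by_contra hcon
      push_neg at hcon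
      have := Finset.card_le_card hcon
      omega
    obtain ⟨p, hpS, hpT⟩ := hex
    have heq : Phi T a = ∑ c : Fin q, Phi (insert p T) (Function.update a p c) := by
      rw [Phi_eq_sum hpT a]
      funext x
      simp [Finset.sum_apply]
    rw [heq]
    refine Submodule.sum_mem _ fun c _ => ih S (insert p T) (Function.update a p c) hS ?_ ?_
    · exact Finset.insert_subset hpS hTS
    · rw [Finset.card_insert_of_notMem hpT]; omega

lemma stepB (hq2 : 2 ≤ q) : ∀ (k : ℕ) (T : Finset (Pos n r)) (a : Pos n r → Fin q),
    T ∈ SS' n r t → (T.filter fun p => (a p : ℕ) = q - 1).card = k →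
    Phi T a ∈ Submodule.span ℚ
      (Set.range fun b : ↥(FF' q n r t) => phi' b.1.1 b.1.2) := by
  intro k
  induction k using Nat.strong_induction_on with
  | _ k ih =>
  intro T a hT hk
  rcases Nat.eq_zero_or_pos k with hk0 | hkpos
  · -- no value equals q-1 on T
    subst hk0
    have hempty : (T.filter fun p => (a p : ℕ) = q - 1) = ∅ := Finset.card_eq_zero.mp hk
    have hlt : ∀ p ∈ T, (a p : ℕ) < q - 1 := by
      intro p hp
      have hne : ¬ ((a p : ℕ) = q - 1) := by
        intro h
        have : p ∈ T.filter fun p => (a p : ℕ) = q - 1 := Finset.mem_filter.mpr ⟨hp, h⟩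
        rw [hempty] at this; exact absurd this (Finset.notMem_empty p)
      have := (a p).isLt
      omega
    set b : ↥T → Fin (q - 1) := fun p => ⟨(a ↑p : ℕ), hlt ↑p p.2⟩ with hb
    have heq : Phi T a = phi' T b := by
      funext x
      unfold Phi phi'
      refine if_congr ?_ rfl rfl
      constructor
      · intro h p
        rw [h ↑p p.2]
        exact Fin.ext rfl
      · intro h u hu
        rw [h ⟨u, hu⟩]
        exact Fin.ext rfl
    rw [heq]
    exact Submodule.subset_span
      ⟨⟨⟨T, b⟩, Finset.mem_sigma.mpr ⟨hT, Finset.mem_univ _⟩⟩, rfl⟩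
  · -- there is a position with value q - 1
    have hne : (T.filter fun p => (a p : ℕ) = q - 1).Nonempty :=
      Finset.card_pos.mp (by omega)
    obtain ⟨p, hpf⟩ := hne
    obtain ⟨hpT, hpval⟩ := Finset.mem_filter.mp hpf
    have h1 : Phi (T.erase p) a
        = fun x => ∑ c : Fin q, Phi T (Function.update a p c) x := by
      have := Phi_eq_sum (Finset.notMem_erase p T) a (q := q)
      rwa [Finset.insert_erase hpT] at this
    have hfun : Phi T a = Phi (T.erase p) a
        - ∑ c ∈ Finset.univ.erase (a p), Phi T (Function.update a p c) := by
      funext x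
      have h2 := congrFun h1 x
      rw [← Finset.add_sum_erase Finset.univ _ (Finset.mem_univ (a p))] at h2
      rw [Function.update_eq_self] at h2
      have h3 : (∑ c ∈ Finset.univ.erase (a p), Phi T (Function.update a p c)) x
          = ∑ c ∈ Finset.univ.erase (a p), Phi T (Function.update a p c) x := by
        simp [Finset.sum_apply]
      simp only [Pi.sub_apply, h3]
      linarith [h2]
    rw [hfun]
    refine Submodule.sub_mem _ ?_ (Submodule.sum_mem _ fun c hc => ?_)
    · -- erase term
      refine ih ((T.filter fun u => (a u : ℕ) = q - 1).erase p).card ?_ _ a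
        (mem_SS'_of_subset (Finset.erase_subset p T) hT) ?_
      · rw [Finset.card_erase_of_mem hpf]; omega
      · rw [Finset.filter_erase]
    · -- update terms
      have hcne : c ≠ a p := (Finset.mem_erase.mp hc).1
      have hcval : (c : ℕ) ≠ q - 1 := by
        intro h
        exact hcne (Fin.ext (h.trans hpval.symm))
      have hfilt : (T.filter fun u => ((Function.update a p c u : Fin q) : ℕ) = q - 1)
          = (T.filter fun u => (a u : ℕ) = q - 1).erase p := by
        ext u
        simp only [Finset.mem_filter, Finset.mem_erase]
        by_cases hu : u = p
        · subst hu
          simp [Function.update_self, hcval]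
        · rw [Function.update_of_ne hu]
          tauto
      refine ih ((T.filter fun u => (a u : ℕ) = q - 1).erase p).card ?_ _ _ hT ?_
      · rw [Finset.card_erase_of_mem hpf]; omega
      · rw [hfilt]

lemma phi'_xb (hq1 : 1 ≤ q) (b c : Σ T : Finset (Pos n r), ↥T → Fin (q - 1)) :
    phi' b.1 b.2 (xb hq1 c.1 c.2) = if pre b c then 1 else 0 := by
  unfold phi' xb
  by_cases h : pre b c
  · rw [if_pos h]
    obtain ⟨hsub, hv⟩ := h
    refine if_pos fun p => ?_
    rw [dif_pos (hsub p.2), hv p]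
  · rw [if_neg h]
    refine if_neg fun hcond => h ?_
    have hsub : b.1 ⊆ c.1 := by
      intro u hu
      by_contra hun
      have := hcond ⟨u, hu⟩
      rw [dif_neg hun] at this
      have hval : q - 1 = ((b.2 ⟨u, hu⟩ : Fin (q - 1)) : ℕ) := congrArg Fin.val this
      have := (b.2 ⟨u, hu⟩).isLt
      omega
    refine ⟨hsub, fun p => ?_⟩
    have h2 := hcond p
    rw [dif_pos (hsub p.2)] at h2
    have h3 := congrArg Fin.val h2
    exact Fin.ext h3

lemma pre_refl (b : Σ T : Finset (Pos n r), ↥T → Fin (q - 1)) : pre b b :=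
  ⟨Finset.Subset.refl _, fun _ => rfl⟩

lemma eq_of_pre_of_card_le {b c : Σ T : Finset (Pos n r), ↥T → Fin (q - 1)}
    (h : pre b c) (hcard : c.1.card ≤ b.1.card) : b = c := by
  obtain ⟨hsub, hv⟩ := h
  obtain ⟨Tb, fb⟩ := b
  obtain ⟨Tc, fc⟩ := c
  have hT : Tb = Tc := Finset.eq_of_subset_of_card_le hsub hcard
  subst hT
  simp only [Sigma.mk.inj_iff, heq_eq_eq, true_and]
  funext pp
  exact (hv pp).symm

end Stmt10Aux

/-- The family `{φ_b : b ∈ ℱ'}` is linearly independent over `ℚ`;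
hence it is a `ℚ`-basis of `V`, and `dim_ℚ V = |ℱ'|`. -/
theorem stmt10 (q n r t : ℕ) (hq : 2 ≤ q) (hn : 1 ≤ n) (hr : 1 ≤ r) (ht : 1 ≤ t)
    (htnr : t ≤ n * r) :
    LinearIndependent ℚ (fun b : ↥(FF' q n r t) => phi' b.1.1 b.1.2) ∧
    Submodule.span ℚ (Set.range fun b : ↥(FF' q n r t) => phi' b.1.1 b.1.2) = VV q n r t ∧
    Module.finrank ℚ ↥(VV q n r t) = (FF' q n r t).card := by
  have hq1 : 1 ≤ q := by omega
  have hli : LinearIndependent ℚ (fun b : ↥(FF' q n r t) => phi' b.1.1 b.1.2) := by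
    rw [Fintype.linearIndependent_iff]
    intro g hg
    have heval : ∀ c : ↥(FF' q n r t),
        ∑ b ∈ Finset.univ.filter (fun b : ↥(FF' q n r t) => pre b.1 c.1), g b = 0 := by
      intro c
      have h0 := congrFun hg (xb hq1 c.1.1 c.1.2)
      simp only [Finset.sum_apply, Pi.smul_apply, smul_eq_mul, Pi.zero_apply] at h0
      have h1 : ∀ b : ↥(FF' q n r t),
          g b * phi' b.1.1 b.1.2 (xb hq1 c.1.1 c.1.2)
            = if pre b.1 c.1 then g b else 0 := by
        intro b
        rw [Stmt10Aux.phi'_xb hq1 b.1 c.1]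
        by_cases h : pre b.1 c.1 <;> simp [h]
      rw [Finset.sum_congr rfl fun b _ => h1 b, ← Finset.sum_filter] at h0
      exact h0
    have main : ∀ (k : ℕ) (c : ↥(FF' q n r t)), c.1.1.card = k → g c = 0 := by
      intro k
      induction k using Nat.strong_induction_on with
      | _ k ih =>
      intro c hc
      have h0 := heval c
      have hcmem : c ∈ Finset.univ.filter (fun b : ↥(FF' q n r t) => pre b.1 c.1) :=
        Finset.mem_filter.mpr ⟨Finset.mem_univ _, Stmt10Aux.pre_refl _⟩
      rw [← Finset.add_sum_erase _ _ hcmem] at h0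
      have hz : ∀ b ∈ (Finset.univ.filter
          (fun b : ↥(FF' q n r t) => pre b.1 c.1)).erase c, g b = 0 := by
        intro b hb
        obtain ⟨hbne, hbf⟩ := Finset.mem_erase.mp hb
        have hpre : pre b.1 c.1 := (Finset.mem_filter.mp hbf).2
        have hlt : b.1.1.card < k := by
          rcases lt_or_ge b.1.1.card k with h | h
          · exact h
          · exfalso
            have hbc : b.1 = c.1 :=
              Stmt10Aux.eq_of_pre_of_card_le hpre (by omega)
            exact hbne (Subtype.ext hbc)
        exact ih _ hlt b rfl
      rw [Finset.sum_eq_zero hz, add_zero] at h0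
      exact h0
    intro i
    exact main i.1.1.card i rfl
  have hspan : Submodule.span ℚ
      (Set.range fun b : ↥(FF' q n r t) => phi' b.1.1 b.1.2) = VV q n r t := by
    apply le_antisymm
    · rw [Submodule.span_le]
      rintro _ ⟨b, rfl⟩
      dsimp only
      rw [SetLike.mem_coe]
      have hT : b.1.1 ∈ SS' n r t := (Finset.mem_sigma.mp b.2).1
      have hTex : ∃ S ∈ SS n r t, b.1.1 ⊆ S := by
        simpa [SS'] using hT
      obtain ⟨S, hS, hsub⟩ := hTex
      have heq : phi' b.1.1 b.1.2 = Stmt10Aux.Phi b.1.1 (xb hq1 b.1.1 b.1.2) := by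
        funext x
        unfold phi' Stmt10Aux.Phi xb
        refine if_congr ?_ rfl rfl
        constructor
        · intro h u hu; rw [dif_pos hu]; exact h ⟨u, hu⟩
        · intro h p; have := h ↑p p.2; rwa [dif_pos p.2] at this
      rw [heq]
      exact Stmt10Aux.stepA (S.card - b.1.1.card) S b.1.1 _ hS hsub rfl
    · have : VV q n r t ≤ Submodule.span ℚ
          (Set.range fun b : ↥(FF' q n r t) => phi' b.1.1 b.1.2) := by
        unfold VV
        rw [Submodule.span_le]
        rintro _ ⟨a, haFF, rfl⟩
        rw [SetLike.mem_coe]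
        have hS : a.1 ∈ SS n r t := (Finset.mem_sigma.mp haFF).1
        have hS' : a.1 ∈ SS' n r t := by
          simp only [SS', Finset.mem_filter, Finset.mem_univ, true_and]
          exact ⟨a.1, hS, Finset.Subset.refl _⟩
        set e : Pos n r → Fin q :=
          fun p => if h : p ∈ a.1 then a.2 ⟨p, h⟩ else ⟨0, by omega⟩ with he
        have heq : phi a.1 a.2 = Stmt10Aux.Phi a.1 e := by
          funext x
          unfold phi Stmt10Aux.Phi
          refine if_congr ?_ rfl rfl
          constructor
          · intro h u hu
            rw [show e u = a.2 ⟨u, hu⟩ from dif_pos hu]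
            exact h ⟨u, hu⟩
          · intro h p
            have := h ↑p p.2
            rwa [show e ↑p = a.2 p from dif_pos p.2] at this
        rw [heq]
        exact Stmt10Aux.stepB hq _ a.1 e hS' rfl
      exact this
  refine ⟨hli, hspan, ?_⟩
  have hfr := finrank_span_eq_card hli
  rw [hspan] at hfr
  rw [hfr, Fintype.card_coe]
end
end

section
/- There exists a function m : X → ℤ such that for every a ∈ ℱ, Σ_{x∈X} m(x) φ_a(x) = (q^t/|X|) Σ_{x∈X} φ_a(x) = 1. (This verifies the divisibility condition for V with divisibility constant c₁ = q^t.) -/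
open Finset

attribute [local instance] Classical.propDecidable

noncomputable section

lemma blockSet_card {n r t : ℕ} (tv : Fin n → ℕ) (htv : tv ∈ tuples n r t) :
    (blockSet n r tv).card = t := by
  obtain ⟨h1, h2⟩ := Finset.mem_filter.mp htv
  have hle : ∀ i, tv i ≤ r := by
    intro i
    have := Fintype.mem_piFinset.mp h1 i
    simpa [Nat.lt_succ_iff] using this
  rw [blockSet, Finset.card_filter, Fintype.sum_prod_type]
  have key : ∀ i : Fin n, (∑ j : Fin r, if ((j : ℕ) < tv i) then 1 else 0) = tv i := by
    intro i
    rw [Fin.sum_univ_eq_sum_range (fun j => if j < tv i then 1 else 0) r,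
      ← Finset.card_filter]
    have : (Finset.range r).filter (· < tv i) = Finset.range (tv i) := by
      ext j
      have := hle i
      simp only [Finset.mem_filter, Finset.mem_range]
      omega
    rw [this, Finset.card_range]
  calc (∑ i : Fin n, ∑ j : Fin r, if ((j:ℕ) < tv i) then 1 else 0)
      = ∑ i : Fin n, tv i := Finset.sum_congr rfl fun i _ => key i
    _ = t := h2

lemma SS_card {n r t : ℕ} {S : Finset (Pos n r)} (hS : S ∈ SS n r t) : S.card = t := by
  obtain ⟨tv, htv, rfl⟩ := Finset.mem_image.mp hS
  exact blockSet_card tv htv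

lemma mem_SS'_of_subset {n r t : ℕ} {B S : Finset (Pos n r)} (hS : S ∈ SS n r t)
    (hBS : B ⊆ S) : B ∈ SS' n r t := by
  rw [SS', Finset.mem_filter]
  exact ⟨Finset.mem_univ _, S, hS, hBS⟩

/-- The support of `x`: positions where `x` is not the last symbol. -/
def Tx (q n r : ℕ) (x : XX q n r) : Finset (Pos n r) :=
  Finset.univ.filter fun p => (x p : ℕ) ≠ q - 1

/-- The integral weight function `m`. -/
def mdef (q n r t : ℕ) (x : XX q n r) : ℤ :=
  ∑ B ∈ SS' n r t, if Tx q n r x ⊆ B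
    then (1 - (q:ℤ)) ^ ((B \ Tx q n r x).card) * (q:ℤ) ^ (t - B.card) else 0

section FixedS
variable {q n r t : ℕ} (S : Finset (Pos n r)) (av : ↥S → Fin q)

/-- local factor -/
def Fd (B : Finset (Pos n r)) (p : Pos n r) (v : Fin q) : ℚ :=
  (if (∀ h : p ∈ S, v = av ⟨p, h⟩) then (1:ℚ) else 0) *
  (if p ∈ B then (if (v:ℕ) = q-1 then 1-(q:ℚ) else 1)
   else (if (v:ℕ) = q-1 then (1:ℚ) else 0))

/-- value of the local column sums -/
def Gd (B : Finset (Pos n r)) (p : Pos n r) : ℚ :=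
  if h : p ∈ S then
    (if p ∈ B then (if ((av ⟨p,h⟩ : ℕ) = q-1) then 1-(q:ℚ) else 1)
     else (if ((av ⟨p,h⟩ : ℕ) = q-1) then (1:ℚ) else 0))
  else (if p ∈ B then 0 else 1)

def fd (p : Pos n r) : ℚ :=
  if h : p ∈ S then (if ((av ⟨p,h⟩ : ℕ) = q-1) then 1-(q:ℚ) else 1) else 0

def gd (p : Pos n r) : ℚ :=
  if h : p ∈ S then (if ((av ⟨p,h⟩ : ℕ) = q-1) then (q:ℚ) else 0) else 0

lemma phi_eq_prod (x : XX q n r) :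
    phi S av x = ∏ p : Pos n r, (if (∀ h : p ∈ S, x p = av ⟨p, h⟩) then (1:ℚ) else 0) := by
  rw [Finset.prod_boole, phi]
  have hiff : (∀ p ∈ (Finset.univ : Finset (Pos n r)), ∀ h : p ∈ S, x p = av ⟨p, h⟩)
      ↔ (∀ p : ↥S, x ↑p = av p) := by
    constructor
    · intro H p; exact H p.1 (Finset.mem_univ _) p.2
    · intro H p hp h; exact H ⟨p, h⟩
  by_cases h : ∀ p : ↥S, x ↑p = av p
  · rw [if_pos h, if_pos (hiff.mpr h)]
  · rw [if_neg h, if_neg (fun hh => h (hiff.mp hh))]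

lemma claimA (B : Finset (Pos n r)) (x : XX q n r) :
    (if Tx q n r x ⊆ B then (1-(q:ℚ))^((B \ Tx q n r x).card) else 0) * phi S av x
      = ∏ p : Pos n r, Fd S av B p (x p) := by
  have h2 : (∏ p : Pos n r, (if p ∈ B then (if ((x p : ℕ) = q-1) then 1-(q:ℚ) else 1)
      else (if ((x p : ℕ) = q-1) then (1:ℚ) else 0)))
      = (1-(q:ℚ))^((B \ Tx q n r x).card) * (if Tx q n r x ⊆ B then (1:ℚ) else 0) := by
    rw [Finset.prod_ite]
    congr 1
    · rw [Finset.filter_univ_mem, Finset.prod_ite, Finset.prod_const, Finset.prod_const,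
        one_pow, mul_one]
      congr 2
      ext p
      simp [Tx, Finset.mem_sdiff, not_not]
    · rw [Finset.prod_boole]
      have hiff : (∀ p ∈ Finset.univ.filter (fun p : Pos n r => ¬ p ∈ B),
          ((x p : ℕ) = q-1)) ↔ Tx q n r x ⊆ B := by
        simp only [Finset.mem_filter, Finset.mem_univ, true_and, Tx, Finset.subset_iff,
          ne_eq]
        constructor
        · intro H p hp
          by_contra hB
          exact hp (H p hB)
        · intro H p hB
          by_contra hx
          exact hB (H hx)
      by_cases h : Tx q n r x ⊆ B
      · rw [if_pos h, if_pos (hiff.mpr h)]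
      · rw [if_neg h, if_neg (fun hh => h (hiff.mp hh))]
  calc (if Tx q n r x ⊆ B then (1-(q:ℚ))^((B \ Tx q n r x).card) else 0) * phi S av x
      = phi S av x * ((1-(q:ℚ))^((B \ Tx q n r x).card) *
          (if Tx q n r x ⊆ B then (1:ℚ) else 0)) := by
        by_cases hsub : Tx q n r x ⊆ B <;> simp [hsub] <;> ring
    _ = ∏ p : Pos n r, Fd S av B p (x p) := by
        rw [phi_eq_prod S av x, ← h2]
        simp only [Fd]
        rw [Finset.prod_mul_distrib]

lemma inner_eval (B : Finset (Pos n r)) :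
    ∑ x : XX q n r, (if Tx q n r x ⊆ B then (1-(q:ℚ))^((B \ Tx q n r x).card) else 0)
      * phi S av x = ∏ p : Pos n r, (∑ v : Fin q, Fd S av B p v) := by
  rw [Finset.prod_univ_sum, Fintype.piFinset_univ]
  exact Finset.sum_congr rfl fun x _ => claimA S av B x

lemma col_sum (hq : 2 ≤ q) (B : Finset (Pos n r)) (p : Pos n r) :
    (∑ v : Fin q, Fd S av B p v) = Gd S av B p := by
  have hq1 : 1 ≤ q := by omega
  have hcard1 : (Finset.univ.filter fun v : Fin q => (v : ℕ) = q-1)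
      = {(⟨q-1, by omega⟩ : Fin q)} := by
    ext v
    simp [Fin.ext_iff]
  by_cases hpS : p ∈ S
  · have hrw : ∀ v : Fin q, Fd S av B p v = if v = av ⟨p, hpS⟩ then
        (if p ∈ B then (if ((v:ℕ) = q-1) then 1-(q:ℚ) else 1)
         else (if ((v:ℕ) = q-1) then (1:ℚ) else 0)) else 0 := by
      intro v
      rw [Fd]
      simp only [forall_prop_of_true hpS]
      by_cases hv : v = av ⟨p, hpS⟩ <;> simp [hv]
    rw [Gd, dif_pos hpS]
    simp only [hrw]
    rw [Finset.sum_ite_eq' Finset.univ (av ⟨p, hpS⟩)]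
    simp
  · have hrw : ∀ v : Fin q, Fd S av B p v =
        (if p ∈ B then (if ((v:ℕ) = q-1) then 1-(q:ℚ) else 1)
         else (if ((v:ℕ) = q-1) then (1:ℚ) else 0)) := by
      intro v
      rw [Fd]
      have hv : (∀ h : p ∈ S, v = av ⟨p, h⟩) := fun h => absurd h hpS
      rw [if_pos hv, one_mul]
    rw [Gd, dif_neg hpS]
    simp only [hrw]
    by_cases hpB : p ∈ B
    · simp only [if_pos hpB]
      rw [Finset.sum_ite, Finset.sum_const, Finset.sum_const, hcard1,
        Finset.filter_not, Finset.card_sdiff_of_subset (Finset.filter_subset _ _), hcard1]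
      simp only [Finset.card_singleton, Finset.card_univ, Fintype.card_fin, one_smul,
        nsmul_eq_mul]
      rw [Nat.cast_sub hq1]
      push_cast
      ring
    · simp only [if_neg hpB]
      rw [Finset.sum_boole, hcard1]
      simp

end FixedS

lemma main_sum {q n r t : ℕ} (hq : 2 ≤ q) {S : Finset (Pos n r)} (hS : S ∈ SS n r t)
    (av : ↥S → Fin q) :
    ∑ x : XX q n r, ((mdef q n r t x : ℤ) : ℚ) * phi S av x = 1 := by
  have hq1 : 1 ≤ q := by omega
  have hScard : S.card = t := SS_card hS
  calc ∑ x : XX q n r, ((mdef q n r t x : ℤ) : ℚ) * phi S av x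
      = ∑ x : XX q n r, ∑ B ∈ SS' n r t, (q:ℚ)^(t - B.card) *
          ((if Tx q n r x ⊆ B then (1-(q:ℚ))^((B \ Tx q n r x).card) else 0)
            * phi S av x) := by
        refine Finset.sum_congr rfl fun x _ => ?_
        rw [mdef]
        push_cast [apply_ite (fun z : ℤ => (z : ℚ))]
        rw [Finset.sum_mul]
        refine Finset.sum_congr rfl fun B _ => ?_
        split_ifs <;> ring
    _ = ∑ B ∈ SS' n r t, (q:ℚ)^(t - B.card) * ∏ p : Pos n r, (∑ v : Fin q, Fd S av B p v) := by
        rw [Finset.sum_comm]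
        refine Finset.sum_congr rfl fun B _ => ?_
        rw [← Finset.mul_sum, inner_eval S av B]
    _ = ∑ B ∈ SS' n r t, (q:ℚ)^(t - B.card) * ∏ p : Pos n r, Gd S av B p := by
        refine Finset.sum_congr rfl fun B _ => ?_
        rw [Finset.prod_congr rfl fun p _ => col_sum S av hq B p]
    _ = ∑ B ∈ S.powerset, (q:ℚ)^(t - B.card) * ∏ p : Pos n r, Gd S av B p := by
        refine (Finset.sum_subset
          (fun B hB => mem_SS'_of_subset hS (Finset.mem_powerset.mp hB)) ?_).symm
        intro B hB hBp
        have hns : ¬ B ⊆ S := fun h => hBp (Finset.mem_powerset.mpr h)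
        obtain ⟨p, hpB, hpS⟩ := Finset.not_subset.mp hns
        have hz : Gd S av B p = 0 := by rw [Gd, dif_neg hpS, if_pos hpB]
        rw [Finset.prod_eq_zero (Finset.mem_univ p) hz, mul_zero]
    _ = ∑ B ∈ S.powerset, (∏ p ∈ B, fd S av p) * (∏ p ∈ S \ B, gd S av p) := by
        refine Finset.sum_congr rfl fun B hB => ?_
        have hBS : B ⊆ S := Finset.mem_powerset.mp hB
        have h1 : (∏ p : Pos n r, Gd S av B p) = ∏ p ∈ S, Gd S av B p := by
          refine (Finset.prod_subset (Finset.subset_univ S) ?_).symm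
          intro p _ hpS
          rw [Gd, dif_neg hpS, if_neg (fun hpB => hpS (hBS hpB))]
        have h2 : (∏ p ∈ S, Gd S av B p) =
            (∏ p ∈ S \ B, Gd S av B p) * ∏ p ∈ B, Gd S av B p :=
          (Finset.prod_sdiff hBS).symm
        have h3 : (∏ p ∈ B, Gd S av B p) = ∏ p ∈ B, fd S av p := by
          refine Finset.prod_congr rfl fun p hpB => ?_
          have hpS : p ∈ S := hBS hpB
          rw [Gd, fd, dif_pos hpS, dif_pos hpS, if_pos hpB]
        have h5 : ((q:ℚ))^(t - B.card) = ∏ _p ∈ S \ B, (q:ℚ) := by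
          rw [Finset.prod_const, Finset.card_sdiff_of_subset hBS, hScard]
        have h4 : (∏ p ∈ S \ B, (q:ℚ) * Gd S av B p) = ∏ p ∈ S \ B, gd S av p := by
          refine Finset.prod_congr rfl fun p hp => ?_
          obtain ⟨hpS, hpB⟩ := Finset.mem_sdiff.mp hp
          rw [Gd, gd, dif_pos hpS, dif_pos hpS, if_neg hpB]
          split_ifs <;> ring
        rw [h1, h2, h3, h5, ← h4]
        rw [Finset.prod_mul_distrib]
        ring
    _ = ∏ p ∈ S, (fd S av p + gd S av p) := (Finset.prod_add _ _ S).symm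
    _ = 1 := by
        refine Finset.prod_eq_one fun p hp => ?_
        rw [fd, gd, dif_pos hp, dif_pos hp]
        split_ifs <;> ring

lemma phi_sum {q n r t : ℕ} (hq : 2 ≤ q) {S : Finset (Pos n r)} (hS : S ∈ SS n r t)
    (av : ↥S → Fin q) :
    ∑ x : XX q n r, phi S av x = (q:ℚ)^(n*r - t) := by
  have hScard : S.card = t := SS_card hS
  calc ∑ x : XX q n r, phi S av x
      = ∑ x : XX q n r, ∏ p : Pos n r,
          (if (∀ h : p ∈ S, x p = av ⟨p, h⟩) then (1:ℚ) else 0) :=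
        Finset.sum_congr rfl fun x _ => phi_eq_prod S av x
    _ = ∏ p : Pos n r, ∑ v : Fin q, (if (∀ h : p ∈ S, v = av ⟨p, h⟩) then (1:ℚ) else 0) := by
        rw [Finset.prod_univ_sum, Fintype.piFinset_univ]
    _ = ∏ p : Pos n r, (if p ∈ S then (1:ℚ) else q) := by
        refine Finset.prod_congr rfl fun p _ => ?_
        by_cases hpS : p ∈ S
        · rw [if_pos hpS]
          simp only [forall_prop_of_true hpS]
          simp [Finset.sum_ite_eq' Finset.univ (av ⟨p, hpS⟩) (fun _ => (1:ℚ))]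
        · rw [if_neg hpS]
          have hall : ∀ v : Fin q,
              (if (∀ h : p ∈ S, v = av ⟨p, h⟩) then (1:ℚ) else 0) = 1 :=
            fun v => if_pos (fun h => absurd h hpS)
          simp only [hall]
          simp
    _ = (q:ℚ)^(n*r - t) := by
        rw [Finset.prod_ite, Finset.prod_const, Finset.prod_const, one_pow, one_mul,
          Finset.filter_not, Finset.card_sdiff_of_subset (Finset.filter_subset _ _),
          Finset.filter_univ_mem, hScard, Finset.card_univ]
        congr 2
        simp [Fintype.card_prod]

/-- There exists `m : X → ℤ` such that for every `a ∈ ℱ`,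
`∑_{x ∈ X} m(x) φ_a(x) = (q^t/|X|) ∑_{x ∈ X} φ_a(x) = 1`.  (Divisibility condition with
divisibility constant `c₁ = q^t`.) -/
theorem stmt14 (q n r t : ℕ) (hq : 2 ≤ q) (hn : 1 ≤ n) (hr : 1 ≤ r) (ht : 1 ≤ t)
    (htnr : t ≤ n * r) :
    ∃ m : XX q n r → ℤ, ∀ a ∈ FF q n r t,
      (∑ x : XX q n r, (m x : ℚ) * phi a.1 a.2 x =
        ((q : ℚ) ^ t / (Fintype.card (XX q n r) : ℚ)) * ∑ x : XX q n r, phi a.1 a.2 x) ∧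
      (∑ x : XX q n r, (m x : ℚ) * phi a.1 a.2 x = 1) := by
  refine ⟨mdef q n r t, ?_⟩
  rintro ⟨S, av⟩ ha
  have hS : S ∈ SS n r t := (Finset.mem_sigma.mp ha).1
  have key := main_sum hq hS av
  have hps := phi_sum hq hS av
  refine ⟨?_, key⟩
  rw [key, hps]
  have hcard : (Fintype.card (XX q n r)) = q^(n*r) := by
    rw [Fintype.card_fun]
    simp [Fintype.card_prod]
  rw [hcard]
  have hq0 : (q:ℚ) ≠ 0 := Nat.cast_ne_zero.mpr (by omega)
  push_cast
  rw [div_mul_eq_mul_div, ← pow_add]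
  have htt : t + (n*r - t) = n*r := by omega
  rw [htt]
  exact (div_self (pow_ne_zero _ hq0)).symm
end
end

section
/- The orthogonal complement V^⊥ = {g : X → ℚ : Σ_{x∈X} f(x)g(x) = 0 for all f ∈ V} has a ℚ-basis consisting of integer-valued functions g each satisfying ‖g‖₁ = Σ_{x∈X} |g(x)| ≤ 2^{t+1}|ℱ|. -/
open Finset

attribute [local instance] Classical.propDecidable

noncomputable section

/-! Write `z` for a fixed symbol (the paper's `q`) and call `supp z x = {p | x p ≠ z}` the
support of `x`. For `x₀` whose support is not in `𝒮'`, the vector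
`g_{x₀} = δ_{x₀} - ∑_{T ∈ 𝒮', T ⊆ supp x₀} ∑_{U ⊆ T} (-1)^{|T \ U|} δ_{cut x₀ U}`
(where `cut x₀ U` agrees with `x₀` on `U` and is `z` elsewhere) is orthogonal to every
`φ_a`, `a : S → {1,...,q}`: the value `φ_a (cut x₀ U)` only depends on `U ∩ S`, so Möbius
inversion on the subsets of `supp x₀` collapses the double sum to `φ_a x₀`. The `g_{x₀}` agree
with `δ_{x₀}` at every point whose support is not in `𝒮'`, and a vector of `V^⊥` vanishing at
all these points vanishes everywhere (downward induction on the support, testing against the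
indicator of `{x | x = y on supp y}`, which lies in `V`). Hence they form a basis of `V^⊥`, and
the triangle inequality bounds their `ℓ¹`-norms. -/

namespace Finset

variable {α R : Type*} [DecidableEq α] [Ring R]

theorem sum_Icc_neg_one_pow_card_sdiff {U A : Finset α} (hUA : U ⊆ A) :
    ∑ T ∈ Icc U A, (-1 : R) ^ #(T \ U) = if U = A then 1 else 0 := by
  have hdisj : ∀ V ∈ (A \ U).powerset, Disjoint U V := fun V hV =>
    (disjoint_of_subset_left (mem_powerset.1 hV) sdiff_disjoint).symm
  have hinj : Set.InjOn (U ∪ ·) ↑(A \ U).powerset := fun V₁ h₁ V₂ h₂ h => by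
    rw [← union_sdiff_cancel_left (hdisj V₁ h₁), ← union_sdiff_cancel_left (hdisj V₂ h₂)]
    exact congrArg (· \ U) h
  have hpow : ∑ V ∈ (A \ U).powerset, (-1 : R) ^ #V = if A \ U = ∅ then 1 else 0 := by
    exact_mod_cast congrArg (Int.cast : ℤ → R) sum_powerset_neg_one_pow_card
  rw [Icc_eq_image_powerset hUA, sum_image hinj,
    sum_congr rfl fun V hV => by rw [union_sdiff_cancel_left (hdisj V hV)], hpow]
  exact if_congr (sdiff_eq_empty_iff_subset.trans ⟨hUA.antisymm, fun h => h ▸ subset_rfl⟩) rfl rfl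

/-- Möbius inversion on the Boolean lattice of subsets of `A`. -/
theorem sum_powerset_sum_powerset_neg_one_pow_mul (F : Finset α → R) (A : Finset α) :
    ∑ T ∈ A.powerset, ∑ U ∈ T.powerset, (-1 : R) ^ #(T \ U) * F U = F A := by
  rw [sum_comm' (t' := A.powerset) (s' := fun U => Icc U A) fun T U => by
    simp only [mem_powerset, mem_Icc]
    exact ⟨fun h => ⟨⟨h.2, h.1⟩, h.2.trans h.1⟩, fun h => ⟨h.1.2, h.1.1⟩⟩]
  simp only [← sum_mul]
  rw [sum_congr rfl fun U hU => by rw [sum_Icc_neg_one_pow_card_sdiff (mem_powerset.1 hU)]]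
  simp

theorem sum_powerset_neg_one_pow_mul_eq_zero {F : Finset α → R} {S T : Finset α}
    (hF : ∀ U, F (U ∩ S) = F U) (hTS : ¬T ⊆ S) :
    ∑ U ∈ T.powerset, (-1 : R) ^ #(T \ U) * F U = 0 := by
  obtain ⟨p, hpT, hpS⟩ := not_subset.1 hTS
  have hF' : ∀ U, F (insert p U) = F U := fun U => by
    rw [← hF, insert_inter_of_notMem hpS, hF]
  have hsign : ∀ U ∈ (T.erase p).powerset,
      (-1 : R) ^ #(T \ insert p U) = -(-1) ^ #(T \ U) := fun U hU => by
    have hpU : p ∉ U := fun h => notMem_erase p T (mem_powerset.1 hU h)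
    rw [sdiff_insert, ← card_erase_add_one (mem_sdiff.2 ⟨hpT, hpU⟩), pow_succ, mul_neg_one,
      neg_neg]
  have hT : T.powerset = (insert p (T.erase p)).powerset := by rw [insert_erase hpT]
  rw [hT, sum_powerset_insert (notMem_erase p T), ← sum_add_distrib]
  refine sum_eq_zero fun U hU => ?_
  rw [hsign U hU, hF', neg_mul, add_neg_cancel]

theorem sum_filter_subset_sum_powerset_neg_one_pow_mul {𝒟 : Finset (Finset α)} {S A : Finset α}
    (hS : ∀ T ⊆ S, T ∈ 𝒟) {F : Finset α → R} (hF : ∀ U, F (U ∩ S) = F U) :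
    ∑ T ∈ 𝒟.filter (· ⊆ A), ∑ U ∈ T.powerset, (-1 : R) ^ #(T \ U) * F U = F (A ∩ S) := by
  rw [← sum_powerset_sum_powerset_neg_one_pow_mul F (A ∩ S)]
  refine (sum_subset (fun T hT => ?_) fun T hT hT' => ?_).symm
  · have hT := subset_inter_iff.1 (mem_powerset.1 hT)
    exact mem_filter.2 ⟨hS T hT.2, hT.1⟩
  · refine sum_powerset_neg_one_pow_mul_eq_zero hF fun hTS => hT' ?_
    exact mem_powerset.2 (subset_inter (mem_filter.1 hT).2 hTS)

end Finset

theorem linearIndependent_and_span_image_eq {R X : Type*} [Ring R] [DecidableEq X]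
    [DecidableEq (X → R)] {W : Submodule R (X → R)} {K : Finset X} {v : X → X → R}
    (hvW : ∀ x ∈ K, v x ∈ W) (hvK : ∀ x ∈ K, ∀ y ∈ K, v x y = (Pi.single x 1 : X → R) y)
    (hW : ∀ h ∈ W, (∀ y ∈ K, h y = 0) → h = 0) :
    LinearIndependent R (fun g : ↥(K.image v) => (g : X → R)) ∧
      Submodule.span R ↑(K.image v) = W := by
  have hsum : ∀ (c : X → R), ∀ y ∈ K, (∑ x ∈ K, c x • v x) y = c y := fun c y hy => by
    simp only [Finset.sum_apply, Pi.smul_apply, smul_eq_mul]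
    rw [Finset.sum_eq_single_of_mem y hy fun x hx hxy => by
      rw [hvK x hx y hy, Pi.single_eq_of_ne hxy.symm, mul_zero], hvK y hy y hy,
      Pi.single_eq_same, mul_one]
  constructor
  · have hK : LinearIndepOn R v ↑K := by
      rw [linearIndepOn_finset_iff]
      intro c hc y hy
      rw [← hsum c y hy, hc, Pi.zero_apply]
    change LinearIndepOn R id (↑(K.image v) : Set (X → R))
    rw [Finset.coe_image]
    exact hK.id_image
  · refine le_antisymm (Submodule.span_le.2 fun g hg => ?_) fun h hh => ?_
    · obtain ⟨x, hx, rfl⟩ := Finset.mem_image.1 hg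
      exact hvW x hx
    · have hmem : ∀ x ∈ K, h x • v x ∈ Submodule.span R ↑(K.image v) := fun x hx =>
        Submodule.smul_mem _ _ (Submodule.subset_span (Finset.mem_image_of_mem v hx))
      have hrepr : h = ∑ x ∈ K, h x • v x := by
        refine sub_eq_zero.1 (hW _ (W.sub_mem hh (W.sum_mem fun x hx => W.smul_mem _ (hvW x hx)))
          fun y hy => ?_)
        rw [Pi.sub_apply, hsum h y hy, sub_self]
      rw [hrepr]
      exact Submodule.sum_mem _ hmem

namespace OOA

variable {q n r : ℕ}

section Families

variable {t : ℕ}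

lemma mem_SS' {T : Finset (Pos n r)} : T ∈ SS' n r t ↔ ∃ S ∈ SS n r t, T ⊆ S := by
  simp [SS']

lemma mem_SS'_of_subset {T U : Finset (Pos n r)} (hT : T ∈ SS' n r t) (hUT : U ⊆ T) :
    U ∈ SS' n r t := by
  obtain ⟨S, hS, hTS⟩ := mem_SS'.1 hT
  exact mem_SS'.2 ⟨S, hS, hUT.trans hTS⟩

lemma mem_FF {a : Σ S : Finset (Pos n r), ↥S → Fin q} : a ∈ FF q n r t ↔ a.1 ∈ SS n r t := by
  simp [FF]

lemma card_blockSet {tv : Fin n → ℕ} (htv : ∀ i, tv i ≤ r) : #(blockSet n r tv) = ∑ i, tv i := by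
  rw [blockSet, card_filter, Fintype.sum_prod_type]
  refine sum_congr rfl fun i _ => ?_
  rw [← card_filter]
  exact Fin.card_filter_val_lt.trans (min_eq_right (htv i))

lemma card_of_mem_SS {S : Finset (Pos n r)} (hS : S ∈ SS n r t) : #S = t := by
  obtain ⟨tv, htv, rfl⟩ := mem_image.1 hS
  obtain ⟨hmem, hsum⟩ := mem_filter.1 htv
  rw [card_blockSet fun i => Nat.lt_succ_iff.1 (mem_range.1 (Fintype.mem_piFinset.1 hmem i)), hsum]

lemma card_le_of_mem_SS' {T : Finset (Pos n r)} (hT : T ∈ SS' n r t) : #T ≤ t := by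
  obtain ⟨S, hS, hTS⟩ := mem_SS'.1 hT
  exact (card_le_card hTS).trans_eq (card_of_mem_SS hS)

lemma card_SS'_le : #(SS' n r t) ≤ #(SS n r t) * 2 ^ t := by
  calc #(SS' n r t) ≤ #((SS n r t).biUnion powerset) := card_le_card fun T hT => by
        obtain ⟨S, hS, hTS⟩ := mem_SS'.1 hT
        exact mem_biUnion.2 ⟨S, hS, mem_powerset.2 hTS⟩
    _ ≤ ∑ S ∈ SS n r t, #S.powerset := card_biUnion_le
    _ = #(SS n r t) * 2 ^ t := by
        rw [sum_congr rfl fun S hS => by rw [card_powerset, card_of_mem_SS hS], sum_const,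
          smul_eq_mul]

lemma card_FF : #(FF q n r t) = #(SS n r t) * q ^ t := by
  rw [FF, card_sigma, sum_congr rfl fun S hS => by
    rw [card_univ, Fintype.card_fun, Fintype.card_fin, Fintype.card_coe, card_of_mem_SS hS],
    sum_const, smul_eq_mul]

lemma sum_range_min_sub_mul (N : ℕ) : ∑ i ∈ range N, min r (t - r * i) = min t (r * N) := by
  induction N with
  | zero => simp
  | succ N ih =>
    rw [sum_range_succ, ih, mul_add_one]
    omega

lemma SS_nonempty (htnr : t ≤ n * r) : (SS n r t).Nonempty := by
  refine ⟨blockSet n r fun i => min r (t - r * i), mem_image_of_mem _ (mem_filter.2 ⟨?_, ?_⟩)⟩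
  · exact Fintype.mem_piFinset.2 fun i => mem_range.2 (by omega)
  · rw [Fin.sum_univ_eq_sum_range (fun i => min r (t - r * i)), sum_range_min_sub_mul,
      mul_comm r n, min_eq_left htnr]

lemma one_add_card_SS'_mul_le (hq : 2 ≤ q) (htnr : t ≤ n * r) :
    1 + #(SS' n r t) * 2 ^ t ≤ 2 ^ (t + 1) * #(FF q n r t) := by
  have hS : 1 ≤ #(SS n r t) * 2 ^ t :=
    Nat.one_le_iff_ne_zero.2 (mul_ne_zero (SS_nonempty htnr).card_pos.ne' (by positivity))
  calc 1 + #(SS' n r t) * 2 ^ t ≤ 1 + #(SS n r t) * 2 ^ t * 2 ^ t := by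
        gcongr; exact card_SS'_le
    _ ≤ 2 ^ (t + 1) * (#(SS n r t) * 2 ^ t) := by rw [pow_succ]; nlinarith
    _ ≤ 2 ^ (t + 1) * #(FF q n r t) := by
        rw [card_FF]; gcongr

end Families

def supp (z : Fin q) (x : XX q n r) : Finset (Pos n r) := univ.filter fun p => x p ≠ z

def cut (z : Fin q) (x : XX q n r) (U : Finset (Pos n r)) : XX q n r :=
  fun p => if p ∈ U then x p else z

/-- In the paper's notation this is `δ_{x₀} - ∑_b φ'_b(x₀) γ_b`: the `b` with `φ'_b(x₀) = 1`
are the restrictions `x₀|_T`, and `x^c = cut z x₀ U` for `c = x₀|_U ⪯ x₀|_T`. -/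
def perpVec (R : Type*) [Ring R] (t : ℕ) (z : Fin q) (x₀ : XX q n r) : XX q n r → R :=
  Pi.single x₀ 1 - ∑ T ∈ (SS' n r t).filter (· ⊆ supp z x₀), ∑ U ∈ T.powerset,
    (-1 : R) ^ #(T \ U) • Pi.single (cut z x₀ U) 1

variable {t : ℕ} {z : Fin q}

@[simp] lemma mem_supp {x : XX q n r} {p : Pos n r} : p ∈ supp z x ↔ x p ≠ z := by
  simp [supp]

lemma supp_cut (x : XX q n r) (U : Finset (Pos n r)) : supp z (cut z x U) = U ∩ supp z x := by
  ext p
  by_cases hp : p ∈ U <;> simp [cut, hp]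

lemma cut_supp (x : XX q n r) : cut z x (supp z x) = x := by
  funext p
  by_cases hp : x p = z <;> simp [cut, hp]

lemma cut_inter_apply (x : XX q n r) (U S : Finset (Pos n r)) {p : Pos n r} (hp : p ∈ S) :
    cut z x (U ∩ S) p = cut z x U p := by
  simp [cut, hp]

lemma supp_subset_of_eqOn {x y : XX q n r} (hxy : ∀ p ∈ supp z y, x p = y p) :
    supp z y ⊆ supp z x := fun p hp => mem_supp.2 (hxy p hp ▸ mem_supp.1 hp)

lemma eq_of_supp_eq {x y : XX q n r} (h : supp z x = supp z y)
    (hxy : ∀ p ∈ supp z y, x p = y p) : x = y := by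
  funext p
  by_cases hp : p ∈ supp z y
  · exact hxy p hp
  · have hpx : p ∉ supp z x := h ▸ hp
    simp only [mem_supp, not_not] at hp hpx
    rw [hp, hpx]

lemma phi_congr {S : Finset (Pos n r)} (a : ↥S → Fin q) {x y : XX q n r}
    (h : ∀ p ∈ S, x p = y p) : phi S a x = phi S a y := by
  simp only [phi, fun p : ↥S => h p p.2]

lemma phi_mem_VV {T S : Finset (Pos n r)} (hS : S ∈ SS n r t) (hTS : T ⊆ S) (b : ↥T → Fin q) :
    phi T b ∈ VV q n r t := by
  have hrepr : phi T b = ∑ a ∈ univ.filter fun a : ↥S → Fin q => ∀ p : ↥T, a ⟨p, hTS p.2⟩ = b p,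
      phi S a := by
    funext x
    have hphi : ∀ a : ↥S → Fin q, phi S a x = if (fun p : ↥S => x p) = a then 1 else 0 :=
      fun a => if_congr funext_iff.symm rfl rfl
    simp only [Finset.sum_apply, hphi, sum_ite_eq, mem_filter, mem_univ, true_and]
    rfl
  rw [hrepr]
  exact Submodule.sum_mem _ fun a _ => Submodule.subset_span ⟨⟨S, a⟩, mem_FF.2 hS, rfl⟩

lemma mem_orthogonalBilin_VV_iff {g : XX q n r → ℚ} :
    g ∈ (VV q n r t).orthogonalBilin (dotProductBilin ℚ ℚ) ↔
      ∀ a ∈ FF q n r t, phi a.1 a.2 ⬝ᵥ g = 0 := by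
  refine ⟨fun h a ha => h _ (Submodule.subset_span ⟨a, ha, rfl⟩), fun h f hf => ?_⟩
  have hle : VV q n r t ≤ LinearMap.ker ((dotProductBilin ℚ ℚ).flip g) := by
    rw [VV, Submodule.span_le]
    rintro _ ⟨a, ha, rfl⟩
    exact h a ha
  exact hle hf

lemma dotProduct_perpVec {R : Type*} [CommRing R] (f : XX q n r → R) (x₀ : XX q n r) :
    f ⬝ᵥ perpVec R t z x₀ = f x₀ - ∑ T ∈ (SS' n r t).filter (· ⊆ supp z x₀),
      ∑ U ∈ T.powerset, (-1 : R) ^ #(T \ U) * f (cut z x₀ U) := by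
  simp only [perpVec, dotProduct_sub, dotProduct_sum, dotProduct_smul, dotProduct_single,
    mul_one, smul_eq_mul]

lemma perpVec_mem_orthogonalBilin (x₀ : XX q n r) :
    perpVec ℚ t z x₀ ∈ (VV q n r t).orthogonalBilin (dotProductBilin ℚ ℚ) := by
  refine mem_orthogonalBilin_VV_iff.2 fun ⟨S, a⟩ ha => ?_
  rw [dotProduct_perpVec, sub_eq_zero]
  dsimp only
  have hS : ∀ T ⊆ S, T ∈ SS' n r t := fun T hT => mem_SS'.2 ⟨S, mem_FF.1 ha, hT⟩
  have hF : ∀ U, phi S a (cut z x₀ (U ∩ S)) = phi S a (cut z x₀ U) := fun U =>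
    phi_congr a fun p hp => cut_inter_apply x₀ U S hp
  rw [sum_filter_subset_sum_powerset_neg_one_pow_mul (F := fun U => phi S a (cut z x₀ U)) hS hF,
    hF, cut_supp]

lemma perpVec_apply_of_supp_notMem {R : Type*} [Ring R] (x₀ : XX q n r) {y : XX q n r}
    (hy : supp z y ∉ SS' n r t) : perpVec R t z x₀ y = (Pi.single x₀ 1 : XX q n r → R) y := by
  have hne : ∀ T ∈ (SS' n r t).filter (· ⊆ supp z x₀), ∀ U ∈ T.powerset, y ≠ cut z x₀ U := by
    rintro T hT U hU rfl
    obtain ⟨hT, hTx⟩ := mem_filter.1 hT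
    refine hy ?_
    rw [supp_cut, inter_eq_left.2 ((mem_powerset.1 hU).trans hTx)]
    exact mem_SS'_of_subset hT (mem_powerset.1 hU)
  simp only [perpVec, Pi.sub_apply, Finset.sum_apply, Pi.smul_apply]
  rw [sum_eq_zero fun T hT => sum_eq_zero fun U hU => by
    rw [Pi.single_eq_of_ne (hne T hT U hU), smul_zero], sub_zero]

lemma intCast_perpVec (R : Type*) [Ring R] (x₀ y : XX q n r) :
    ((perpVec ℤ t z x₀ y : ℤ) : R) = perpVec R t z x₀ y := by
  simp [perpVec, Pi.single_apply, apply_ite]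

lemma sum_abs_perpVec_le (x₀ : XX q n r) :
    ∑ y, |perpVec ℚ t z x₀ y| ≤ 1 + #(SS' n r t) * 2 ^ t := by
  have hsingle : ∀ (c : ℚ) (x : XX q n r), ∑ y, |(c • Pi.single x 1 : XX q n r → ℚ) y| = |c| :=
    fun c x => by simp [Pi.single_apply, apply_ite]
  calc ∑ y, |perpVec ℚ t z x₀ y|
      ≤ ∑ y, (|(Pi.single x₀ 1 : XX q n r → ℚ) y| +
          ∑ T ∈ (SS' n r t).filter (· ⊆ supp z x₀), ∑ U ∈ T.powerset,
            |((-1 : ℚ) ^ #(T \ U) • Pi.single (cut z x₀ U) 1 : XX q n r → ℚ) y|) := by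
        refine sum_le_sum fun y _ => (abs_sub _ _).trans (add_le_add_right ?_ _)
        simp only [Finset.sum_apply]
        exact (abs_sum_le_sum_abs _ _).trans (sum_le_sum fun T _ => abs_sum_le_sum_abs _ _)
    _ = 1 + ∑ T ∈ (SS' n r t).filter (· ⊆ supp z x₀), (2 : ℚ) ^ #T := by
        rw [sum_add_distrib, sum_comm]
        congr 1
        · simpa using hsingle 1 x₀
        refine sum_congr rfl fun T _ => ?_
        rw [sum_comm]
        simp only [hsingle, abs_pow, abs_neg, abs_one, one_pow, sum_const, card_powerset,
          nsmul_eq_mul, mul_one, Nat.cast_pow, Nat.cast_ofNat]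
    _ ≤ 1 + #((SS' n r t).filter (· ⊆ supp z x₀)) * 2 ^ t := by
        rw [← nsmul_eq_mul, ← sum_const]
        gcongr with T hT
        · norm_num
        · exact card_le_of_mem_SS' (mem_filter.1 hT).1
    _ ≤ 1 + #(SS' n r t) * 2 ^ t := by
        gcongr
        exact filter_subset _ _

lemma apply_eq_zero_of_forall_supp_ssubset {h : XX q n r → ℚ}
    (hh : h ∈ (VV q n r t).orthogonalBilin (dotProductBilin ℚ ℚ)) {y : XX q n r}
    (hy : supp z y ∈ SS' n r t) (ih : ∀ x, supp z y ⊂ supp z x → h x = 0) : h y = 0 := by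
  obtain ⟨S, hS, hyS⟩ := mem_SS'.1 hy
  have hψ := hh _ (phi_mem_VV hS hyS fun p => y p)
  rw [dotProductBilin_apply_apply, dotProduct, sum_eq_single y] at hψ
  · simpa [phi] using hψ
  · intro x _ hxy
    by_cases hx : ∀ p : ↥(supp z y), x p = y p
    · have hsub := supp_subset_of_eqOn fun p hp => hx ⟨p, hp⟩
      have hne : supp z y ≠ supp z x := fun he => hxy (eq_of_supp_eq he.symm fun p hp => hx ⟨p, hp⟩)
      rw [ih x (hsub.ssubset_of_ne hne), mul_zero]
    · rw [phi, if_neg hx, zero_mul]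
  · simp

lemma eq_zero_of_mem_orthogonalBilin {h : XX q n r → ℚ}
    (hh : h ∈ (VV q n r t).orthogonalBilin (dotProductBilin ℚ ℚ))
    (hK : ∀ y, supp z y ∉ SS' n r t → h y = 0) : h = 0 := by
  funext y
  induction y using (InvImage.wf (supp z) wellFounded_gt).induction with
  | h y ih =>
    by_cases hy : supp z y ∈ SS' n r t
    · exact apply_eq_zero_of_forall_supp_ssubset hh hy ih
    · exact hK y hy

end OOA

open OOA

theorem stmt17_general (q n r t : ℕ) (hq : 2 ≤ q) (htnr : t ≤ n * r) :
    ∃ G : Finset (XX q n r → ℚ),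
      (∀ g ∈ G, (∀ x, ∃ z : ℤ, g x = (z : ℚ)) ∧
        ∑ x : XX q n r, |g x| ≤ 2 ^ (t + 1) * ((FF q n r t).card : ℚ)) ∧
      LinearIndependent ℚ (fun g : ↥G => (g : XX q n r → ℚ)) ∧
      (Submodule.span ℚ (G : Set (XX q n r → ℚ)) : Set (XX q n r → ℚ)) =
        {g | ∀ f ∈ VV q n r t, ∑ x : XX q n r, f x * g x = 0} := by
  let z : Fin q := ⟨0, by omega⟩
  let K := univ.filter fun y : XX q n r => supp z y ∉ SS' n r t
  obtain ⟨hlin, hspan⟩ := linearIndependent_and_span_image_eq (K := K) (v := perpVec ℚ t z)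
    (fun x₀ _ => perpVec_mem_orthogonalBilin x₀)
    (fun x₀ _ y hy => perpVec_apply_of_supp_notMem x₀ (mem_filter.1 hy).2)
    (fun h hh hK => eq_zero_of_mem_orthogonalBilin hh fun y hy => hK y (by simpa [K] using hy))
  refine ⟨K.image (perpVec ℚ t z), fun g hg => ?_, hlin, by rw [hspan]; rfl⟩
  obtain ⟨x₀, -, rfl⟩ := mem_image.1 hg
  refine ⟨fun y => ⟨perpVec ℤ t z x₀ y, (intCast_perpVec ℚ x₀ y).symm⟩, ?_⟩
  exact (sum_abs_perpVec_le x₀).trans (by exact_mod_cast one_add_card_SS'_mul_le hq htnr)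

/-- The orthogonal complement
`V^⊥ = {g : X → ℚ : ∑_{x ∈ X} f(x) g(x) = 0 for all f ∈ V}` has a `ℚ`-basis of
integer-valued functions `g`, each satisfying `‖g‖₁ = ∑_{x ∈ X} |g(x)| ≤ 2^{t+1} |ℱ|`. -/
theorem stmt17 (q n r t : ℕ) (hq : 2 ≤ q) (hn : 1 ≤ n) (hr : 1 ≤ r) (ht : 1 ≤ t)
    (htnr : t ≤ n * r) :
    ∃ G : Finset (XX q n r → ℚ),
      (∀ g ∈ G, (∀ x, ∃ z : ℤ, g x = (z : ℚ)) ∧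
        ∑ x : XX q n r, |g x| ≤ 2 ^ (t + 1) * ((FF q n r t).card : ℚ)) ∧
      LinearIndependent ℚ (fun g : ↥G => (g : XX q n r → ℚ)) ∧
      (Submodule.span ℚ (G : Set (XX q n r → ℚ)) : Set (XX q n r → ℚ)) =
        {g | ∀ f ∈ VV q n r t, ∑ x : XX q n r, f x * g x = 0} :=
  stmt17_general q n r t hq htnr
end
end
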